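/- arXiv:1206.3603 — 2 statements merged into one kernel-verified Lean document; each statement's English description precedes it below -/
import Mathlib

section
/- For every real t > 0, we have −2·log(Φ̄(t))·Φ̄(t) − (2t·e^{-t²/2})/√(2π) > 0; that is, −2·Φ̄(t)·log(Φ̄(t)) > (2t/√(2π))·e^{-t²/2}. -/
/-!
Write `B = PhiBar` and `h t = -2 B(t) log B(t) - 2 t e^{-t²/2} / √(2π)`. Then `h 0 = 0`, `h → 0` at
infinity, and `h' = (2 e^{-t²/2} / √(2π)) · g` with `g t = t² + 1 + 2 log B(t)`. Mills' inequality
`t ∫_t^∞ e^{-x²/2} dx < e^{-t²/2}` makes `g` strictly decreasing, so `h` first increases and then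
decreases towards its limit `0`; hence `h > 0` on `(0, ∞)`.
-/

/-- `Phi t` is the probability that a standard Gaussian random variable has
absolute value at most `t`. -/
noncomputable def Phi (t : ℝ) : ℝ :=
  (1 / Real.sqrt (2 * Real.pi)) * ∫ x in (-t)..t, Real.exp (-x ^ 2 / 2)

/-- `PhiBar t = 1 - Phi t`. -/
noncomputable def PhiBar (t : ℝ) : ℝ := 1 - Phi t

open MeasureTheory Real Filter Set Topology

theorem pos_of_hasDerivAt_mul_of_strictAntiOn {h g w : ℝ → ℝ} {a t : ℝ}
    (hh : ∀ x ∈ Ici a, HasDerivAt h (w x * g x) x) (hw : ∀ x ∈ Ioi a, 0 < w x)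
    (hg : StrictAntiOn g (Ici a)) (ha : h a = 0) (hlim : Tendsto h atTop (𝓝 0)) (ht : a < t) :
    0 < h t := by
  have hcont {s : Set ℝ} (hs : s ⊆ Ici a) : ContinuousOn h s := fun x hx =>
    (hh x (hs hx)).continuousAt.continuousWithinAt
  have hderiv {s : Set ℝ} (hs : s ⊆ Ici a) (x : ℝ) (hx : x ∈ s) :
      HasDerivWithinAt h (w x * g x) s x :=
    (hh x (hs hx)).hasDerivWithinAt
  rcases le_or_gt 0 (g t) with hgt | hgt
  · have hmono : StrictMonoOn h (Icc a t) := by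
      refine strictMonoOn_of_hasDerivWithinAt_pos (convex_Icc a t) (hcont Icc_subset_Ici_self)
        (hderiv (interior_subset.trans Icc_subset_Ici_self)) fun x hx => ?_
      rw [interior_Icc] at hx
      exact mul_pos (hw x hx.1) (hgt.trans_lt (hg hx.1.le ht.le hx.2))
    simpa [ha] using hmono (left_mem_Icc.2 ht.le) (right_mem_Icc.2 ht.le) ht
  · have hsub : Ici t ⊆ Ici a := Ici_subset_Ici.2 ht.le
    have hanti : StrictAntiOn h (Ici t) := by
      refine strictAntiOn_of_hasDerivWithinAt_neg (convex_Ici t) (hcont hsub)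
        (hderiv (interior_subset.trans hsub)) fun x hx => ?_
      rw [interior_Ici] at hx
      exact mul_neg_of_pos_of_neg (hw x (ht.trans hx))
        ((hg (hsub self_mem_Ici) (hsub (mem_Ici.2 hx.le)) hx).trans hgt)
    have hnext : 0 ≤ h (t + 1) :=
      le_of_tendsto hlim <| (eventually_ge_atTop (t + 1)).mono fun s hs =>
        hanti.antitoneOn (show t ≤ t + 1 by linarith) (show t ≤ s by linarith) hs
    linarith [hanti (le_refl t) (show t ≤ t + 1 by linarith) (lt_add_one t)]

theorem setIntegral_pos_of_forall_pos {g : ℝ → ℝ} {s : Set ℝ} (hs : MeasurableSet s)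
    (hvol : volume s ≠ 0) (hg : IntegrableOn g s) (hpos : ∀ x ∈ s, 0 < g x) :
    0 < ∫ x in s, g x := by
  rw [setIntegral_pos_iff_support_of_nonneg_ae
    ((ae_restrict_mem hs).mono fun x hx => (hpos x hx).le) hg]
  rwa [inter_eq_right.2 fun x hx => Function.mem_support.2 (hpos x hx).ne', pos_iff_ne_zero]

theorem integrable_exp_neg_sq_div_two : Integrable fun x : ℝ => exp (-x ^ 2 / 2) := by
  convert integrable_exp_neg_mul_sq one_half_pos using 3; ring

theorem integral_exp_neg_sq_div_two : ∫ x : ℝ, exp (-x ^ 2 / 2) = √(2 * π) := by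
  convert integral_gaussian (1 / 2) using 3 <;> ring_nf

theorem hasDerivAt_exp_neg_sq_div_two (x : ℝ) :
    HasDerivAt (fun x => exp (-x ^ 2 / 2)) (-x * exp (-x ^ 2 / 2)) x := by
  have h : HasDerivAt (fun x : ℝ => -x ^ 2 / 2) (-x) x :=
    ((hasDerivAt_pow 2 x).fun_neg.div_const 2).congr_deriv (by norm_num; ring)
  simpa [mul_comm] using h.exp

theorem tendsto_exp_neg_sq_div_two_atTop : Tendsto (fun x : ℝ => exp (-x ^ 2 / 2)) atTop (𝓝 0) :=
  tendsto_exp_atBot.comp <| by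
    simpa only [neg_div, Function.comp_def] using tendsto_neg_atTop_atBot.comp
      ((tendsto_pow_atTop two_ne_zero).atTop_div_const (two_pos : (0 : ℝ) < 2))

theorem tendsto_mul_exp_neg_sq_div_two_atTop :
    Tendsto (fun x : ℝ => x * exp (-x ^ 2 / 2)) atTop (𝓝 0) := by
  refine ((tendsto_rpow_abs_mul_exp_neg_mul_sq_cocompact one_half_pos 1).mono_left
    atTop_le_cocompact).congr' ?_
  filter_upwards [eventually_ge_atTop 0] with x hx
  rw [rpow_one, abs_of_nonneg hx]; ring_nf

noncomputable def gaussTail (t : ℝ) : ℝ := ∫ x in Ioi t, exp (-x ^ 2 / 2)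

theorem gaussTail_pos (t : ℝ) : 0 < gaussTail t :=
  setIntegral_pos_of_forall_pos measurableSet_Ioi (by simp)
    integrable_exp_neg_sq_div_two.integrableOn fun x _ => exp_pos _

theorem hasDerivAt_gaussTail (t : ℝ) : HasDerivAt gaussTail (-exp (-t ^ 2 / 2)) t := by
  have hI {s : Set ℝ} := integrable_exp_neg_sq_div_two.integrableOn (s := s)
  have : gaussTail =
      fun t => (∫ x in Ioi 0, exp (-x ^ 2 / 2)) - ∫ x in 0..t, exp (-x ^ 2 / 2) := by
    ext t; rw [← intervalIntegral.integral_Ioi_sub_Ioi' hI hI, gaussTail]; ring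
  rw [this]
  exact ((Continuous.integral_hasStrictDerivAt (by fun_prop) 0 t).hasDerivAt).const_sub _

-- Mills' inequality.
theorem mul_gaussTail_lt_exp (t : ℝ) : t * gaussTail t < exp (-t ^ 2 / 2) := by
  have hI := integrable_exp_neg_sq_div_two.integrableOn (s := Ioi t)
  have hmomI : IntegrableOn (fun x => x * exp (-x ^ 2 / 2)) (Ioi t) := by
    convert (integrable_mul_exp_neg_mul_sq one_half_pos).integrableOn using 3; ring_nf
  have hmom : ∫ x in Ioi t, x * exp (-x ^ 2 / 2) = exp (-t ^ 2 / 2) := by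
    rw [integral_Ioi_of_hasDerivAt_of_tendsto' (f := fun x => -exp (-x ^ 2 / 2))
      (fun x _ => by simpa using (hasDerivAt_exp_neg_sq_div_two x).fun_neg) hmomI
      (by simpa using tendsto_exp_neg_sq_div_two_atTop.neg)]
    simp
  have hgap : 0 < ∫ x in Ioi t, (x * exp (-x ^ 2 / 2) - t * exp (-x ^ 2 / 2)) :=
    setIntegral_pos_of_forall_pos measurableSet_Ioi (by simp) (hmomI.sub (hI.const_mul t))
      fun x hx => by rw [← sub_mul]; exact mul_pos (sub_pos.2 hx) (exp_pos _)
  rw [integral_sub hmomI (hI.const_mul t), integral_const_mul, hmom] at hgap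
  rwa [gaussTail, ← sub_pos]

theorem phiBar_eq_gaussTail (t : ℝ) : PhiBar t = 2 / √(2 * π) * gaussTail t := by
  have hI {s : Set ℝ} := integrable_exp_neg_sq_div_two.integrableOn (s := s)
  have hleft : ∫ x in Iic (-t), exp (-x ^ 2 / 2) = gaussTail t := by
    rw [← integral_comp_neg_Ioi, gaussTail]; simp
  have htotal : (∫ x in Iic t, exp (-x ^ 2 / 2)) + gaussTail t = √(2 * π) :=
    (intervalIntegral.integral_Iic_add_Ioi hI hI).trans integral_exp_neg_sq_div_two
  have hmid : ∫ x in (-t)..t, exp (-x ^ 2 / 2) = √(2 * π) - 2 * gaussTail t := by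
    rw [← intervalIntegral.integral_Iic_sub_Iic hI hI, hleft]; linarith
  rw [PhiBar, Phi, hmid]
  field_simp
  ring

theorem phiBar_pos (t : ℝ) : 0 < PhiBar t := by
  rw [phiBar_eq_gaussTail]; exact mul_pos (by positivity) (gaussTail_pos t)

theorem phiBar_zero : PhiBar 0 = 1 := by simp [PhiBar, Phi]

theorem hasDerivAt_phiBar (t : ℝ) :
    HasDerivAt PhiBar (-(2 / √(2 * π) * exp (-t ^ 2 / 2))) t := by
  rw [funext phiBar_eq_gaussTail, ← mul_neg]
  exact (hasDerivAt_gaussTail t).const_mul _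

theorem tendsto_phiBar_atTop : Tendsto PhiBar atTop (𝓝 0) := by
  refine squeeze_zero' (Eventually.of_forall fun t => (phiBar_pos t).le) ?_
    (by simpa only [mul_zero] using tendsto_exp_neg_sq_div_two_atTop.const_mul (2 / √(2 * π)))
  filter_upwards [eventually_ge_atTop 1] with t ht
  rw [phiBar_eq_gaussTail]
  refine mul_le_mul_of_nonneg_left ?_ (by positivity : (0 : ℝ) ≤ 2 / √(2 * π))
  nlinarith [mul_gaussTail_lt_exp t, gaussTail_pos t]

theorem hasDerivAt_sq_add_one_add_two_log_phiBar (t : ℝ) :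
    HasDerivAt (fun u => u ^ 2 + 1 + 2 * log (PhiBar u))
      (2 * t - 4 / √(2 * π) * exp (-t ^ 2 / 2) / PhiBar t) t :=
  (((hasDerivAt_pow 2 t).add_const 1).add
    (((hasDerivAt_phiBar t).log (phiBar_pos t).ne').const_mul 2)).congr_deriv
    (by push_cast; ring)

theorem strictAnti_sq_add_one_add_two_log_phiBar :
    StrictAnti fun u => u ^ 2 + 1 + 2 * log (PhiBar u) := by
  refine strictAnti_of_hasDerivAt_neg hasDerivAt_sq_add_one_add_two_log_phiBar fun x => ?_
  rw [sub_neg, lt_div_iff₀ (phiBar_pos x), phiBar_eq_gaussTail]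
  have hc : 0 < 4 / √(2 * π) := by positivity
  calc 2 * x * (2 / √(2 * π) * gaussTail x) = 4 / √(2 * π) * (x * gaussTail x) := by ring
    _ < 4 / √(2 * π) * exp (-x ^ 2 / 2) := mul_lt_mul_of_pos_left (mul_gaussTail_lt_exp x) hc

noncomputable def phiBarLogGap (t : ℝ) : ℝ :=
  -2 * log (PhiBar t) * PhiBar t - 2 * t * exp (-t ^ 2 / 2) / √(2 * π)

theorem phiBarLogGap_zero : phiBarLogGap 0 = 0 := by simp [phiBarLogGap, phiBar_zero]

theorem hasDerivAt_phiBarLogGap (t : ℝ) :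
    HasDerivAt phiBarLogGap
      (2 / √(2 * π) * exp (-t ^ 2 / 2) * (t ^ 2 + 1 + 2 * log (PhiBar t))) t := by
  have hB := hasDerivAt_phiBar t
  refine ((((hB.log (phiBar_pos t).ne').const_mul (-2)).mul hB).sub
    ((((hasDerivAt_id' t).const_mul 2).mul (hasDerivAt_exp_neg_sq_div_two t)).div_const
      (√(2 * π)))).congr_deriv ?_
  field_simp [(phiBar_pos t).ne']
  ring

theorem tendsto_phiBarLogGap_atTop : Tendsto phiBarLogGap atTop (𝓝 0) := by
  have hlog : Tendsto (fun u => PhiBar u * log (PhiBar u)) atTop (𝓝 0) := by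
    simpa [Function.comp_def] using (continuous_mul_log.tendsto 0).comp tendsto_phiBar_atTop
  convert (hlog.const_mul (-2)).sub
    ((tendsto_mul_exp_neg_sq_div_two_atTop.const_mul 2).div_const (√(2 * π))) using 1
  · ext u; simp only [phiBarLogGap]; ring
  · simp

theorem phiBar_log_ineq (t : ℝ) (ht : 0 < t) :
    -2 * Real.log (PhiBar t) * PhiBar t
      - 2 * t * Real.exp (-t ^ 2 / 2) / Real.sqrt (2 * Real.pi) > 0 := by
  show 0 < phiBarLogGap t
  exact pos_of_hasDerivAt_mul_of_strictAntiOn (fun x _ => hasDerivAt_phiBarLogGap x)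
    (fun x _ => by positivity) (strictAnti_sq_add_one_add_two_log_phiBar.strictAntiOn _)
    phiBarLogGap_zero tendsto_phiBarLogGap_atTop ht
end

section
/- Let β > 0 be a real number such that sup_{t ≥ 0} 2·Φ(β·t)·e^{-t²/2} > 1. Then there exists k₀ ∈ ℕ such that for every natural number k ≥ k₀, ∫_{0}^{∞} (2·Φ(β·t)·e^{-t²/2})^{k} dt ≥ √(2πk) · k². -/
/-! Since `h_β` is continuous and exceeds `1` somewhere on `[0, ∞)`, it exceeds some `c > 1` on
an interval `(t₀, u) ⊆ (0, ∞)`. As `h_β ≥ 0` on `(0, ∞)`, this gives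
`∫₀^∞ h_β^k ≥ (u - t₀) c^k`, which grows exponentially in `k` and so eventually beats
`√(2πk) k² = O(k³)`. Integrability of `h_β^k` comes from `|h_β t| ≤ 2 e^{-t²/2}`. -/

open MeasureTheory

open Filter Set Real ProbabilityTheory Asymptotics Interval

lemma Phi_eq_integral_gaussianPDFReal (t : ℝ) :
    Phi t = ∫ x in -t..t, gaussianPDFReal 0 1 x := by
  simp [Phi, gaussianPDFReal, intervalIntegral.integral_const_mul]

@[fun_prop]
lemma continuous_Phi : Continuous Phi := by
  have hint : ∀ a b, IntervalIntegrable (gaussianPDFReal 0 1) volume a b :=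
    fun a b => (integrable_gaussianPDFReal 0 1).intervalIntegrable
  have hprim := intervalIntegral.continuous_primitive hint 0
  have hPhi : Phi = fun t => (∫ x in 0..t, gaussianPDFReal 0 1 x) -
      ∫ x in 0..-t, gaussianPDFReal 0 1 x := by
    funext t
    rw [intervalIntegral.integral_interval_sub_left (hint _ _) (hint _ _),
      Phi_eq_integral_gaussianPDFReal]
  rw [hPhi]
  exact hprim.sub (hprim.comp continuous_neg)

lemma Phi_nonneg {t : ℝ} (ht : 0 ≤ t) : 0 ≤ Phi t := by
  rw [Phi_eq_integral_gaussianPDFReal]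
  exact intervalIntegral.integral_nonneg (by linarith) fun x _ => gaussianPDFReal_nonneg 0 1 x

lemma abs_Phi_le_one (t : ℝ) : |Phi t| ≤ 1 := by
  have hpdf := integrable_gaussianPDFReal 0 1
  rw [Phi_eq_integral_gaussianPDFReal, ← integral_gaussianPDFReal_eq_one 0 one_ne_zero]
  rw [← Real.norm_eq_abs]
  calc ‖∫ x in -t..t, gaussianPDFReal 0 1 x‖
      ≤ ∫ x in Ι (-t) t, ‖gaussianPDFReal 0 1 x‖ :=
        intervalIntegral.norm_integral_le_integral_norm_uIoc
    _ ≤ ∫ x, ‖gaussianPDFReal 0 1 x‖ :=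
        setIntegral_le_integral hpdf.norm (ae_of_all _ fun x => norm_nonneg _)
    _ = ∫ x, gaussianPDFReal 0 1 x := by
        simp_rw [Real.norm_of_nonneg (gaussianPDFReal_nonneg 0 1 _)]

/-- The function `h_β` of the paper. -/
noncomputable def hFun (β t : ℝ) : ℝ :=
  2 * Phi (β * t) * exp (-t ^ 2 / 2)

lemma continuous_hFun (β : ℝ) : Continuous (hFun β) := by
  unfold hFun
  fun_prop

lemma hFun_nonneg {β t : ℝ} (hβ : 0 ≤ β) (ht : 0 ≤ t) : 0 ≤ hFun β t := by
  have := Phi_nonneg (mul_nonneg hβ ht)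
  unfold hFun
  positivity

lemma abs_hFun_le (β t : ℝ) : |hFun β t| ≤ 2 * exp (-t ^ 2 / 2) := by
  rw [hFun, abs_mul, abs_mul, abs_two, abs_of_pos (exp_pos _)]
  calc 2 * |Phi (β * t)| * exp (-t ^ 2 / 2) ≤ 2 * 1 * exp (-t ^ 2 / 2) := by
        gcongr
        exact abs_Phi_le_one _
    _ = 2 * exp (-t ^ 2 / 2) := by ring

lemma integrable_hFun_pow (β : ℝ) {k : ℕ} (hk : k ≠ 0) :
    Integrable fun t => hFun β t ^ k := by
  refine Integrable.mono' ((integrable_exp_neg_mul_sq (b := 1 / 2) (by norm_num)).const_mul (2 ^ k))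
    ((continuous_hFun β).pow k).aestronglyMeasurable (ae_of_all _ fun t => ?_)
  have hexp_le_one : exp (-t ^ 2 / 2) ≤ 1 := exp_le_one_iff.2 (by nlinarith [sq_nonneg t])
  calc ‖hFun β t ^ k‖ = |hFun β t| ^ k := by rw [norm_pow, Real.norm_eq_abs]
    _ ≤ (2 * exp (-t ^ 2 / 2)) ^ k := pow_le_pow_left₀ (abs_nonneg _) (abs_hFun_le β t) k
    _ = 2 ^ k * exp (-t ^ 2 / 2) ^ k := mul_pow _ _ _
    _ ≤ 2 ^ k * exp (-t ^ 2 / 2) := by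
        gcongr
        exact pow_le_of_le_one (exp_nonneg _) hexp_le_one hk
    _ = 2 ^ k * exp (-(1 / 2) * t ^ 2) := by ring_nf

lemma mul_measureReal_le_setIntegral {α : Type*} [MeasurableSpace α] {μ : Measure α}
    {f : α → ℝ} {s t : Set α} {c : ℝ} (hs : MeasurableSet s) (ht : MeasurableSet t)
    (hμt : μ t ≠ ⊤) (hts : t ⊆ s) (hf : IntegrableOn f s μ)
    (hf_nonneg : ∀ x ∈ s, 0 ≤ f x) (hc : ∀ x ∈ t, c ≤ f x) :
    c * μ.real t ≤ ∫ x in s, f x ∂μ :=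
  (setIntegral_ge_of_const_le_real ht hμt hc (hf.mono_set hts)).trans
    (setIntegral_mono_set hf (ae_restrict_of_forall_mem hs hf_nonneg) hts.eventuallyLE)

lemma eventually_sqrt_mul_sq_le_mul_pow {a c : ℝ} (ha : 0 < a) (hc : 1 < c) :
    ∀ᶠ k : ℕ in atTop, √(2 * π * k) * k ^ 2 ≤ a * c ^ k := by
  have hcubic :
      (fun k : ℕ => √(2 * π * k) * (k : ℝ) ^ 2) =O[atTop] fun k : ℕ => (k : ℝ) ^ 3 := by
    refine IsBigO.of_bound (2 * π) ((eventually_ge_atTop 1).mono fun k hk => ?_)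
    have hk' : (1 : ℝ) ≤ k := by exact_mod_cast hk
    have hsqrt : √(2 * π * k) ≤ 2 * π * k :=
      sqrt_le_self_iff.2 (Or.inr (by nlinarith [pi_gt_three]))
    rw [Real.norm_of_nonneg (by positivity), Real.norm_of_nonneg (by positivity)]
    calc √(2 * π * k) * (k : ℝ) ^ 2 ≤ 2 * π * k * (k : ℝ) ^ 2 := by gcongr
      _ = 2 * π * (k : ℝ) ^ 3 := by ring
  filter_upwards [(hcubic.trans_isLittleO (isLittleO_pow_const_const_pow_of_one_lt 3 hc)).bound ha]
    with k hk
  rwa [Real.norm_of_nonneg (by positivity), Real.norm_of_nonneg (by positivity)] at hk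

theorem integral_h_pow_large (β : ℝ) (hβ : 0 < β)
    (hg : 1 < sSup ((fun t : ℝ => 2 * Phi (β * t) * Real.exp (-t ^ 2 / 2)) ''
      Set.Ici 0)) :
    ∃ k₀ : ℕ, ∀ k : ℕ, k₀ ≤ k →
      Real.sqrt (2 * Real.pi * k) * k ^ 2
        ≤ ∫ t in Set.Ioi (0 : ℝ), (2 * Phi (β * t) * Real.exp (-t ^ 2 / 2)) ^ k := by
  obtain ⟨_, ⟨t₀, ht₀, rfl⟩, h_one_lt⟩ := exists_lt_of_lt_csSup (nonempty_Ici.image _) hg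
  obtain ⟨c, hc, hct₀⟩ := exists_between (show 1 < hFun β t₀ from h_one_lt)
  obtain ⟨u, htu, hIoo⟩ := mem_nhdsGT_iff_exists_Ioo_subset.1 <|
    nhdsWithin_le_nhds ((continuous_hFun β).continuousAt.eventually (lt_mem_nhds hct₀))
  have hgrowth : ∀ k ≠ 0, (u - t₀) * c ^ k ≤ ∫ t in Ioi 0, hFun β t ^ k := by
    intro k hk
    have := mul_measureReal_le_setIntegral measurableSet_Ioi measurableSet_Ioo
      measure_Ioo_lt_top.ne (Ioo_subset_Ioi_self.trans (Ioi_subset_Ioi ht₀))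
      (integrable_hFun_pow β hk).integrableOn
      (fun t ht => pow_nonneg (hFun_nonneg hβ.le (le_of_lt ht)) k)
      (fun t ht => pow_le_pow_left₀ (by linarith) (hIoo ht).le k)
    rwa [Real.volume_real_Ioo_of_le htu.le, mul_comm] at this
  obtain ⟨k₀, hk₀⟩ := eventually_atTop.1 <|
    (eventually_sqrt_mul_sq_le_mul_pow (sub_pos.2 htu) hc).and (eventually_ne_atTop 0)
  exact ⟨k₀, fun k hk => (hk₀ k hk).1.trans (hgrowth k (hk₀ k hk).2)⟩
end
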